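/- For any octonion o and any two orthogonal octonions x and y, one has (o * conj(y)) * x = -(o * conj(x)) * y, where conj denotes octonion conjugation and orthogonality is with respect to the standard inner product on the octonions. -/

import Mathlib

open Quaternion

def Octonion : Type := ℍ[ℝ] × ℍ[ℝ]

noncomputable instance : AddCommGroup Octonion := inferInstanceAs (AddCommGroup (ℍ[ℝ] × ℍ[ℝ]))
noncomputable instance : Module ℝ Octonion := inferInstanceAs (Module ℝ (ℍ[ℝ] × ℍ[ℝ]))

/-- Cayley–Dickson multiplication on pairs of quaternions. -/
noncomputable instance : Mul Octonion :=
  ⟨fun x y =>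
    ((x : ℍ[ℝ] × ℍ[ℝ]).1 * (y : ℍ[ℝ] × ℍ[ℝ]).1 -
        star (y : ℍ[ℝ] × ℍ[ℝ]).2 * (x : ℍ[ℝ] × ℍ[ℝ]).2,
      (y : ℍ[ℝ] × ℍ[ℝ]).2 * (x : ℍ[ℝ] × ℍ[ℝ]).1 +
        (x : ℍ[ℝ] × ℍ[ℝ]).2 * star (y : ℍ[ℝ] × ℍ[ℝ]).1)⟩

/-- Octonion conjugation. -/
noncomputable def Octonion.conj (x : Octonion) : Octonion :=
  ((star (x : ℍ[ℝ] × ℍ[ℝ]).1, -(x : ℍ[ℝ] × ℍ[ℝ]).2) : ℍ[ℝ] × ℍ[ℝ])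

/-- The real part of an octonion. -/
noncomputable def Octonion.re (x : Octonion) : ℝ := (x : ℍ[ℝ] × ℍ[ℝ]).1.re

/-- The standard inner product `⟨x,y⟩ = (1/2) Re (x * conj y + y * conj x)`. -/
noncomputable def Octonion.inner (x y : Octonion) : ℝ :=
  Octonion.re (x * Octonion.conj y + y * Octonion.conj x) / 2

/-- The Euclidean norm of an octonion. -/
noncomputable def Octonion.norm (x : Octonion) : ℝ := Real.sqrt (Octonion.inner x x)

/-! Polarizing `(a * conj y) * y = ‖y‖² a` gives `(a * conj x) * y + (a * conj y) * x = 2⟨x, y⟩ a`,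
which vanishes for orthogonal `x, y`. On Cayley–Dickson pairs this is an associative computation
in `ℍ` whose only further input is that `u * star v + v * star u` is a real scalar, hence central. -/

namespace Quaternion

variable {R : Type*} [CommRing R]

theorem mul_star_add_mul_star (a b : ℍ[R]) :
    a * star b + b * star a = ((2 * (a * star b).re : R) : ℍ[R]) := by
  have h := coe_normSq_add a b
  rw [normSq_add, coe_add, coe_add] at h
  calc a * star b + b * star a
      = (normSq a + a * star b + b * star a + normSq b) - (normSq a + normSq b : ℍ[R]) := by abel
    _ = ((2 * (a * star b).re : R) : ℍ[R]) := by rw [← h]; abel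

theorem star_mul_add_star_mul (a b : ℍ[R]) :
    star a * b + star b * a = a * star b + b * star a := by
  ext <;> simp <;> ring

end Quaternion

namespace Octonion

open Quaternion

theorem ext {x y : Octonion} (h₁ : x.1 = y.1) (h₂ : x.2 = y.2) : x = y := Prod.ext h₁ h₂

@[simp] theorem fst_mul (x y : Octonion) : (x * y).1 = x.1 * y.1 - star y.2 * x.2 := rfl
@[simp] theorem snd_mul (x y : Octonion) : (x * y).2 = y.2 * x.1 + x.2 * star y.1 := rfl
@[simp] theorem fst_add (x y : Octonion) : (x + y).1 = x.1 + y.1 := rfl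
@[simp] theorem snd_add (x y : Octonion) : (x + y).2 = x.2 + y.2 := rfl
@[simp] theorem fst_conj (x : Octonion) : (conj x).1 = star x.1 := rfl
@[simp] theorem snd_conj (x : Octonion) : (conj x).2 = -x.2 := rfl

theorem inner_eq (x y : Octonion) : inner x y = (x.1 * star y.1).re + (x.2 * star y.2).re := by
  simp only [inner, re, fst_add, fst_mul, fst_conj, snd_conj, star_neg, neg_mul, sub_neg_eq_add,
    re_add, re_mul, re_star, imI_star, imJ_star, imK_star]
  ring

theorem mul_conj_mul_add_mul_conj_mul (a x y : Octonion) :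
    a * conj x * y + a * conj y * x = (2 * inner x y) • a := by
  have h₁ := mul_star_add_mul_star x.1 y.1
  have h₂ := mul_star_add_mul_star x.2 y.2
  have hinner : 2 * inner x y = 2 * (x.1 * star y.1).re + 2 * (x.2 * star y.2).re := by
    rw [inner_eq]; ring
  refine ext ?_ ?_
  · calc (a * conj x * y + a * conj y * x).1
        = a.1 * (star x.1 * y.1 + star y.1 * x.1) + (star y.2 * x.2 + star x.2 * y.2) * a.1 := by
          simp only [fst_add, fst_mul, snd_mul, fst_conj, snd_conj, star_neg, star_star]
          noncomm_ring
      _ = a.1 * (x.1 * star y.1 + y.1 * star x.1) + (x.2 * star y.2 + y.2 * star x.2) * a.1 := by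
          rw [star_mul_add_star_mul, star_mul_add_star_mul, add_comm (y.2 * _)]
      _ = ((2 * inner x y : ℝ) : ℍ[ℝ]) * a.1 := by
          rw [h₁, h₂, ← coe_commutes, ← add_mul, ← coe_add, hinner]
      _ = ((2 * inner x y) • a).1 := coe_mul_eq_smul _ _
  · calc (a * conj x * y + a * conj y * x).2
        = (x.2 * star y.2 + y.2 * star x.2) * a.2 + a.2 * (x.1 * star y.1 + y.1 * star x.1) := by
          simp only [snd_add, fst_mul, snd_mul, fst_conj, snd_conj, star_neg, star_star]
          noncomm_ring
      _ = ((2 * inner x y : ℝ) : ℍ[ℝ]) * a.2 := by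
          rw [h₁, h₂, ← coe_commutes, ← add_mul, ← coe_add, add_comm, hinner]
      _ = ((2 * inner x y) • a).2 := coe_mul_eq_smul _ _

end Octonion

/-- For any octonion `o` and any two orthogonal octonions `x, y`,
`(o * conj y) * x = -((o * conj x) * y)`. -/
theorem octonion_conj_mul_orthogonal (o x y : Octonion)
    (h : Octonion.inner x y = 0) :
    (o * Octonion.conj y) * x = -((o * Octonion.conj x) * y) := by
  have hsum := Octonion.mul_conj_mul_add_mul_conj_mul o x y
  rw [h, mul_zero, zero_smul] at hsum
  exact eq_neg_of_add_eq_zero_right hsum
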